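/- For all n ≥ 0, K₃(n) = 2ⁿ + M(n), where M(n) = 2 if n ≡ 0 (mod 3) and M(n) = −1 if n ≡ 1 or 2 (mod 3) (Binet-style formula for the Modified third-order Jacobsthal sequence). -/
import Mathlib


def K3 : ℕ → ℤ
  | 0 => 3
  | 1 => 1
  | 2 => 3
  | n + 3 => K3 (n + 2) + K3 (n + 1) + 2 * K3 n

def M (m : ℕ) : ℤ := if m % 3 = 0 then 2 else -1

theorem stmt11 : ∀ n : ℕ, K3 n = 2 ^ n + M n := by
  have key : ∀ n : ℕ, K3 n = 2 ^ n + M n ∧ K3 (n+1) = 2 ^ (n+1) + M (n+1) ∧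
      K3 (n+2) = 2 ^ (n+2) + M (n+2) := by
    intro n
    induction n with
    | zero => simp [K3, M]
    | succ k ih =>
      obtain ⟨h0, h1, h2⟩ := ih
      refine ⟨h1, h2, ?_⟩
      have : K3 (k+3) = K3 (k+2) + K3 (k+1) + 2 * K3 k := rfl
      rw [this, h0, h1, h2]
      have hm : (k+3) % 3 = k % 3 := by omega
      simp only [M, hm]
      rcases (show k % 3 = 0 ∨ k % 3 = 1 ∨ k % 3 = 2 by omega) with h | h | h <;>
        simp [h, show (k+1) % 3 = (k%3+1)%3 from by omega, show (k+2) % 3 = (k%3+2)%3 from by omega] <;> ring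
  exact fun n => (key n).1
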